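/- Let A be a closed subset of a topological space X and p a prime. If A is a ℚ-homological Z_n-set in X and a ℚ_p-homological Z_{n+1}-set in X, then A is an R_p-homological Z_n-set in X. -/

import Mathlib

open CategoryTheory CategoryTheory.Limits AlgebraicTopology

/-- The functor sending a type `S` to the free `G`-coefficient group `S →₀ G`. -/
noncomputable def coeffFunctor (G : Type) [AddCommGroup G] : Type ⥤ AddCommGrpCat where
  obj S := AddCommGrpCat.of (S →₀ G)
  map f := AddCommGrpCat.ofHom (Finsupp.mapDomain.addMonoidHom f)
  map_id S := AddCommGrpCat.ext fun x => Finsupp.mapDomain_id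
  map_comp f g := AddCommGrpCat.ext fun x =>
    Finsupp.mapDomain_comp (f := ConcreteCategory.hom f) (g := ConcreteCategory.hom g)

/-- The singular chain complex of `X` with coefficients in `G`. -/
noncomputable def singularChains (G : Type) [AddCommGroup G] (X : Type) [TopologicalSpace X] :
    ChainComplex AddCommGrpCat ℕ :=
  (alternatingFaceMapComplex AddCommGrpCat).obj
    (TopCat.toSSet.obj (TopCat.of X) ⋙ coeffFunctor G)

/-- The chain map induced by a continuous map. -/
noncomputable def singularChainsMap (G : Type) [AddCommGroup G] {X Y : Type}
    [TopologicalSpace X] [TopologicalSpace Y] (f : C(X, Y)) :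
    singularChains G X ⟶ singularChains G Y :=
  (alternatingFaceMapComplex AddCommGrpCat).map
    (Functor.whiskerRight (TopCat.toSSet.map (TopCat.ofHom f : TopCat.of X ⟶ TopCat.of Y)) (coeffFunctor G))

lemma singularChainsMap_comp (G : Type) [AddCommGroup G] {X Y Z : Type}
    [TopologicalSpace X] [TopologicalSpace Y] [TopologicalSpace Z] (f : C(X, Y)) (g : C(Y, Z)) :
    singularChainsMap G (g.comp f) = singularChainsMap G f ≫ singularChainsMap G g := by
  unfold singularChainsMap
  erw [← Functor.map_comp, ← Functor.whiskerRight_comp, ← Functor.map_comp]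
  rfl

/-- Relative singular homology `H_k(U, U \ A; G)` of the pair of subspaces `(U, U \ A)` of `X`,
defined as the homology of the cokernel of the chain map induced by the inclusion
`U \ A ⊆ U`. -/
noncomputable def relHomology (G : Type) [AddCommGroup G] {X : Type} [TopologicalSpace X]
    (U A : Set X) (k : ℕ) : AddCommGrpCat :=
  (cokernel (singularChainsMap G
    (⟨Set.inclusion (Set.diff_subset : U \ A ⊆ U), continuous_inclusion _⟩ :
      C(↥(U \ A), ↥U)))).homology k

/-- `A` is a `G`-homological `Z_n`-set in `X` : it is closed and `H_k(U, U \ A; G) = 0`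
for all open `U ⊆ X` and all `k ≤ n`. -/
def IsHomologicalZSet (G : Type) [AddCommGroup G] {X : Type} [TopologicalSpace X]
    (n : ℕ) (A : Set X) : Prop :=
  IsClosed A ∧ ∀ U : Set X, IsOpen U → ∀ k : ℕ, k ≤ n → Subsingleton (relHomology G U A k)

/-- The subgroup `R_p ⊆ ℚ` of rationals whose denominator is not divisible by `p`
(i.e. rationals `a/b` with `b` coprime to `p`). -/
def RpGroup (p : ℕ) : AddSubgroup ℚ where
  carrier := {q | ∃ a b : ℤ, IsCoprime b (p : ℤ) ∧ (b : ℚ) * q = (a : ℚ)}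
  zero_mem' := ⟨0, 1, isCoprime_one_left, by simp⟩
  add_mem' := by
    rintro x y ⟨a₁, b₁, h₁, e₁⟩ ⟨a₂, b₂, h₂, e₂⟩
    refine ⟨a₁ * b₂ + a₂ * b₁, b₁ * b₂, h₁.mul_left h₂, ?_⟩
    push_cast
    linear_combination (b₂ : ℚ) * e₁ + (b₁ : ℚ) * e₂
  neg_mem' := by
    rintro x ⟨a, b, h, e⟩
    exact ⟨-a, b, h, by push_cast; linear_combination -e⟩

/-! The coefficient sequence `0 → R_p → ℚ → ℚ/R_p → 0` gives, for every open `U`, a short exact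
sequence of relative singular chain complexes of `(U, U \ A)`: it is exact before passing to the
quotient by the chains of `U \ A`, and the snake lemma keeps it exact afterwards because chains of
`U \ A` inject into chains of `U`. In its long exact homology sequence
`H_{k+1}(U, U \ A; ℚ/R_p) → H_k(U, U \ A; R_p) → H_k(U, U \ A; ℚ)` both outer terms vanish
for `k ≤ n`. -/

namespace CategoryTheory.ShortComplex

section CokernelRow

variable {C : Type*} [Category C] [Abelian C] {S₁ S₂ : ShortComplex C} (φ : S₁ ⟶ S₂)

noncomputable abbrev cokernelRow : ShortComplex C :=
  ShortComplex.mk (cokernel.map φ.τ₁ φ.τ₂ S₁.f S₂.f φ.comm₁₂)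
    (cokernel.map φ.τ₂ φ.τ₃ S₁.g S₂.g φ.comm₂₃) (by ext; simp)

noncomputable def snakeInputOfShortExact (hS₁ : S₁.ShortExact) (hS₂ : S₂.ShortExact) :
    SnakeInput C where
  L₀ := ShortComplex.mk (kernel.map φ.τ₁ φ.τ₂ S₁.f S₂.f φ.comm₁₂)
    (kernel.map φ.τ₂ φ.τ₃ S₁.g S₂.g φ.comm₂₃) (by ext; simp)
  L₁ := S₁
  L₂ := S₂
  L₃ := cokernelRow φ
  v₀₁ :=
    { τ₁ := kernel.ι φ.τ₁, τ₂ := kernel.ι φ.τ₂, τ₃ := kernel.ι φ.τ₃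
      comm₁₂ := (kernel.lift_ι _ _ _).symm, comm₂₃ := (kernel.lift_ι _ _ _).symm }
  v₁₂ := φ
  v₂₃ :=
    { τ₁ := cokernel.π φ.τ₁, τ₂ := cokernel.π φ.τ₂, τ₃ := cokernel.π φ.τ₃
      comm₁₂ := cokernel.π_desc _ _ _, comm₂₃ := cokernel.π_desc _ _ _ }
  h₀ := by
    apply isLimitOfIsLimitπ <;> apply (KernelFork.isLimitMapConeEquiv _ _).2 <;>
      exact kernelIsKernel _
  h₃ := by
    apply isColimitOfIsColimitπ <;> apply (CokernelCofork.isColimitMapCoconeEquiv _ _).2 <;>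
      exact cokernelIsCokernel _
  w₀₂ := by ext <;> exact kernel.condition _
  w₁₃ := by ext <;> exact cokernel.condition _
  L₁_exact := hS₁.exact
  epi_L₁_g := hS₁.epi_g
  L₂_exact := hS₂.exact
  mono_L₂_f := hS₂.mono_f

lemma shortExact_cokernelRow (hS₁ : S₁.ShortExact) (hS₂ : S₂.ShortExact) [Mono φ.τ₃] :
    (cokernelRow φ).ShortExact := by
  let D := snakeInputOfShortExact φ hS₁ hS₂
  -- the connecting map `D.δ` starts at `kernel φ.τ₃`, which is zero
  have : Mono (cokernelRow φ).f :=
    D.L₂'_exact.mono_g ((isZero_kernel_of_mono φ.τ₃).eq_of_src _ _)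
  have := hS₂.epi_g
  have : Epi (cokernelRow φ).g := epi_of_epi_fac (cokernel.π_desc _ _ _)
  exact ShortExact.mk' D.L₃_exact inferInstance inferInstance

end CokernelRow

lemma ShortExact.isZero_homology_X₁ {C ι : Type*} [Category C] [Abelian C] {c : ComplexShape ι}
    {S : ShortComplex (HomologicalComplex C c)} (hS : S.ShortExact) {i j : ι} (hij : c.Rel i j)
    (h₃ : IsZero (S.X₃.homology i)) (h₂ : IsZero (S.X₂.homology j)) :
    IsZero (S.X₁.homology j) :=
  (hS.homology_exact₁ i j hij).isZero_X₂ (h₃.eq_of_src _ _) (h₂.eq_of_tgt _ _)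

end CategoryTheory.ShortComplex

lemma Function.Exact.finsuppMapRange {ι A B C : Type*} [AddCommGroup A] [AddCommGroup B]
    [AddCommGroup C] {f : A →+ B} {g : B →+ C} (hfg : Function.Exact f g) :
    Function.Exact (Finsupp.mapRange.addMonoidHom (ι := ι) f)
      (Finsupp.mapRange.addMonoidHom g) := by
  classical
  intro x
  constructor
  · intro hx
    have hsingle :
        ∀ s, Finsupp.single s (x s) ∈ (Finsupp.mapRange.addMonoidHom (ι := ι) f).range := by
      intro s
      obtain ⟨a, ha⟩ := (hfg (x s)).1 (by simpa using DFunLike.congr_fun hx s)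
      exact ⟨Finsupp.single s a, by simp [ha]⟩
    rw [← x.sum_single]
    exact AddSubgroup.sum_mem _ fun s _ => hsingle s
  · rintro ⟨y, rfl⟩
    ext s
    simp [hfg.apply_apply_eq_zero]

section Coefficients

variable {G₁ G₂ G₃ : Type} [AddCommGroup G₁] [AddCommGroup G₂] [AddCommGroup G₃]

noncomputable def coeffNatTrans (φ : G₁ →+ G₂) : coeffFunctor G₁ ⟶ coeffFunctor G₂ where
  app _ := AddCommGrpCat.ofHom (Finsupp.mapRange.addMonoidHom φ)
  naturality _ _ f := by
    ext x
    exact (Finsupp.mapDomain_mapRange f x φ φ.map_zero φ.map_add).symm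

noncomputable def singularChainsCoeffMap (φ : G₁ →+ G₂) (X : Type) [TopologicalSpace X] :
    singularChains G₁ X ⟶ singularChains G₂ X :=
  (alternatingFaceMapComplex AddCommGrpCat).map
    (Functor.whiskerLeft (TopCat.toSSet.obj (TopCat.of X)) (coeffNatTrans φ))

lemma singularChainsCoeffMap_naturality (φ : G₁ →+ G₂) {X Y : Type} [TopologicalSpace X]
    [TopologicalSpace Y] (f : C(X, Y)) :
    singularChainsMap G₁ f ≫ singularChainsCoeffMap φ Y =
      singularChainsCoeffMap φ X ≫ singularChainsMap G₂ f := by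
  have := congrArg (alternatingFaceMapComplex AddCommGrpCat).map
    (Functor.whiskerLeft_comp_whiskerRight (TopCat.toSSet.map (TopCat.ofHom f)) (coeffNatTrans φ))
  rw [Functor.map_comp, Functor.map_comp] at this
  exact this.symm

noncomputable def singularChainsShortComplex {f : G₁ →+ G₂} {g : G₂ →+ G₃}
    (hfg : Function.Exact f g) (X : Type) [TopologicalSpace X] :
    ShortComplex (ChainComplex AddCommGrpCat ℕ) where
  f := singularChainsCoeffMap f X
  g := singularChainsCoeffMap g X
  zero := by
    ext k (c : _ →₀ G₁) : 3
    exact Finsupp.ext fun s => hfg.apply_apply_eq_zero (c s)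

lemma singularChainsShortComplex_shortExact {f : G₁ →+ G₂} {g : G₂ →+ G₃}
    (hf : Function.Injective f) (hg : Function.Surjective g) (hfg : Function.Exact f g)
    (X : Type) [TopologicalSpace X] : (singularChainsShortComplex hfg X).ShortExact := by
  refine HomologicalComplex.shortExact_of_degreewise_shortExact _ fun k => ?_
  refine .mk' ?_ ?_ ?_
  · exact (ShortComplex.ab_exact_iff_function_exact _).2 hfg.finsuppMapRange
  · exact (AddCommGrpCat.mono_iff_injective _).2
      (Finsupp.mapRange_injective _ f.map_zero hf)
  · exact (AddCommGrpCat.epi_iff_surjective _).2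
      (Finsupp.mapRange_surjective _ g.map_zero hg)

noncomputable def singularChainsShortComplexMap {f : G₁ →+ G₂} {g : G₂ →+ G₃}
    (hfg : Function.Exact f g) {X Y : Type} [TopologicalSpace X] [TopologicalSpace Y]
    (φ : C(X, Y)) : singularChainsShortComplex hfg X ⟶ singularChainsShortComplex hfg Y where
  τ₁ := singularChainsMap G₁ φ
  τ₂ := singularChainsMap G₂ φ
  τ₃ := singularChainsMap G₃ φ
  comm₁₂ := singularChainsCoeffMap_naturality f φ
  comm₂₃ := singularChainsCoeffMap_naturality g φ

end Coefficients

lemma TopCat.toSSet_map_app_injective {X Y : TopCat} {f : X ⟶ Y} (hf : Function.Injective f)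
    (k : SimplexCategoryᵒᵖ) : Function.Injective ((TopCat.toSSet.map f).app k) := by
  intro σ τ h
  apply ULift.ext
  apply TopCat.hom_ext
  apply ContinuousMap.ext
  intro x
  exact hf (ConcreteCategory.congr_hom (congrArg ULift.down h) x)

lemma singularChainsMap_mono (G : Type) [AddCommGroup G] {X Y : Type} [TopologicalSpace X]
    [TopologicalSpace Y] {φ : C(X, Y)} (hφ : Function.Injective φ) :
    Mono (singularChainsMap G φ) :=
  HomologicalComplex.mono_of_mono_f _ fun _ => (AddCommGrpCat.mono_iff_injective _).2
    (Finsupp.mapDomain_injective (TopCat.toSSet_map_app_injective (f := TopCat.ofHom φ) hφ _))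

theorem IsHomologicalZSet.of_shortExact {G₁ G₂ G₃ : Type} [AddCommGroup G₁] [AddCommGroup G₂]
    [AddCommGroup G₃] {f : G₁ →+ G₂} {g : G₂ →+ G₃} (hf : Function.Injective f)
    (hg : Function.Surjective g) (hfg : Function.Exact f g) {X : Type} [TopologicalSpace X]
    {A : Set X} {n : ℕ} (h₂ : IsHomologicalZSet G₂ n A) (h₃ : IsHomologicalZSet G₃ (n + 1) A) :
    IsHomologicalZSet G₁ n A := by
  refine ⟨h₂.1, fun U hU k hk => ?_⟩
  let ι : C(↥(U \ A), ↥U) :=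
    ⟨Set.inclusion (Set.sdiff_subset : U \ A ⊆ U), continuous_inclusion _⟩
  have : Mono (singularChainsShortComplexMap hfg ι).τ₃ :=
    singularChainsMap_mono G₃ (Set.inclusion_injective Set.sdiff_subset)
  have hS := ShortComplex.shortExact_cokernelRow (singularChainsShortComplexMap hfg ι)
    (singularChainsShortComplex_shortExact hf hg hfg _)
    (singularChainsShortComplex_shortExact hf hg hfg _)
  -- the terms of `cokernelRow _` are, by definition, the complexes whose homology is `relHomology`
  exact AddCommGrpCat.isZero_iff_subsingleton.1 (hS.isZero_homology_X₁ (i := k + 1) rfl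
    (AddCommGrpCat.isZero_iff_subsingleton.2 (h₃.2 U hU (k + 1) (by omega)))
    (AddCommGrpCat.isZero_iff_subsingleton.2 (h₂.2 U hU k hk)))

theorem stmt15_general {X : Type} [TopologicalSpace X] (A : Set X) (p : ℕ) (n : ℕ)
    (hQ : IsHomologicalZSet ℚ n A)
    (hQp : IsHomologicalZSet (ℚ ⧸ RpGroup p) (n + 1) A) :
    IsHomologicalZSet (↥(RpGroup p)) n A :=
  IsHomologicalZSet.of_shortExact (RpGroup p).subtype_injective
    (QuotientAddGroup.mk'_surjective _) (fun _ => by simp [QuotientAddGroup.eq_zero_iff]) hQ hQp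

/-- If `A` is a `ℚ`-homological `Z_n`-set and a `ℚ_p`-homological `Z_{n+1}`-set, then `A` is an
`R_p`-homological `Z_n`-set. -/
theorem stmt15 {X : Type} [TopologicalSpace X] (A : Set X) (p : ℕ) (hp : p.Prime) (n : ℕ)
    (hQ : IsHomologicalZSet ℚ n A)
    (hQp : IsHomologicalZSet (ℚ ⧸ RpGroup p) (n + 1) A) :
    IsHomologicalZSet (↥(RpGroup p)) n A :=
  stmt15_general A p n hQ hQp
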